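/- arXiv:2211.04640 — 11 statements merged into one kernel-verified Lean document; each statement's English description precedes it below -/
import Mathlib

section
/- Let S be a finite set of monomials (elements of ℕ^N under pointwise lcm, i.e. pointwise max) with a fixed linear order, and let σ ⊆ S with m ∈ S. If m is a gap of σ (i.e. m ∉ σ and lcm(σ ∪ {m}) = lcm(σ)) and m is the smallest bridge of σ ∪ {m}, then m is a true gap of σ that does not dominate any bridge of σ. Conversely, if m is a true gap of σ not dominating any bridge of σ, then m is a gap of σ and m is the smallest bridge of σ ∪ {m}. -/
namespace BarileMacchia

variable {N : ℕ} {M : Type*}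

/-- The lcm (pointwise max of exponent vectors) of a finite set of monomials. -/
def lcmF (mon : M → Fin N → ℕ) (σ : Finset M) : Fin N → ℕ :=
  fun i => σ.sup fun m => mon m i

/-- `m` is a bridge of `σ`: `m ∈ σ` and removing it does not change the lcm. -/
def IsBridge [DecidableEq M] (mon : M → Fin N → ℕ) (σ : Finset M) (m : M) : Prop :=
  m ∈ σ ∧ lcmF mon (σ.erase m) = lcmF mon σ

/-- `m` is a gap of `σ`: `m ∉ σ` and adding it does not change the lcm. -/
def IsGap [DecidableEq M] (mon : M → Fin N → ℕ) (σ : Finset M) (m : M) : Prop :=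
  m ∉ σ ∧ lcmF mon (insert m σ) = lcmF mon σ

/-- A gap `m` of `σ` is a true gap if every bridge of `σ ∪ {m}` dominated by `m`
is already a bridge of `σ`. -/
def IsTrueGap [LinearOrder M] (mon : M → Fin N → ℕ) (σ : Finset M) (m : M) : Prop :=
  IsGap mon σ m ∧ ∀ m', IsBridge mon (insert m σ) m' → m > m' → IsBridge mon σ m'

/-- `m` is the smallest bridge of `σ` (with respect to the linear order on `M`). -/
def IsSmallestBridge [LinearOrder M] (mon : M → Fin N → ℕ) (σ : Finset M) (m : M) : Prop :=
  IsBridge mon σ m ∧ ∀ m', IsBridge mon σ m' → m ≤ m'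

/-- Proposition 2.10: `m` is a gap of `σ` with `sb(σ ∪ {m}) = m` iff `m` is a true gap
of `σ` that does not dominate any bridge of `σ`. -/
theorem statement0 [LinearOrder M] (mon : M → Fin N → ℕ) (σ : Finset M) (m : M) :
    (IsGap mon σ m ∧ IsSmallestBridge mon (insert m σ) m) ↔
      (IsTrueGap mon σ m ∧ ∀ m', IsBridge mon σ m' → ¬ m > m') := by
  constructor
  · rintro ⟨hgap, hsb, hmin⟩
    have key : ∀ m', IsBridge mon σ m' → ¬ m > m' := by
      intro m' hb hlt
      have hne : m ≠ m' := fun h => hgap.1 (h ▸ hb.1)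
      have hb' : IsBridge mon (insert m σ) m' := by
        refine ⟨Finset.mem_insert_of_mem hb.1, ?_⟩
        rw [Finset.erase_insert_of_ne hne]
        funext i
        have h2 := congrFun hb.2 i
        have h3 := congrFun hgap.2 i
        simp only [lcmF, Finset.sup_insert] at *
        rw [h2, h3]
      exact absurd (hmin m' hb') (not_le.mpr hlt)
    refine ⟨⟨hgap, fun m' hb hlt => absurd (hmin m' hb) (not_le.mpr hlt)⟩, key⟩
  · rintro ⟨⟨hgap, htrue⟩, hnod⟩
    refine ⟨hgap, ⟨Finset.mem_insert_self m σ, ?_⟩, ?_⟩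
    · rw [Finset.erase_insert hgap.1]
      exact hgap.2.symm
    · intro m' hb
      by_contra h
      push_neg at h
      exact hnod m' (htrue m' hb h) h


end BarileMacchia
end

section
/- Let S be a finite linearly ordered set of monomials and σ ⊆ S. If m is the smallest bridge of σ, then m is a true gap of σ \ {m} that does not dominate any bridge of σ \ {m}. -/
namespace BarileMacchia

variable {N : ℕ} {M : Type*}

/-- Proposition 2.11: if `m` is the smallest bridge of `σ`, then `m` is a true gap of
`σ \ {m}` that does not dominate any bridge of `σ \ {m}`. -/
theorem statement1 [LinearOrder M] (mon : M → Fin N → ℕ) (σ : Finset M) (m : M)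
    (h : IsSmallestBridge mon σ m) :
    IsTrueGap mon (σ.erase m) m ∧ ∀ m', IsBridge mon (σ.erase m) m' → ¬ m > m' := by
  obtain ⟨⟨hmem, hlcm⟩, hmin⟩ := h
  have hins : insert m (σ.erase m) = σ := Finset.insert_erase hmem
  have key : ∀ m', IsBridge mon (σ.erase m) m' → IsBridge mon σ m' := by
    intro m' ⟨hm'mem, hm'lcm⟩
    refine ⟨Finset.mem_of_mem_erase hm'mem, ?_⟩
    have hsub : (σ.erase m).erase m' ⊆ σ.erase m' :=
      Finset.erase_subset_erase _ (Finset.erase_subset _ _)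
    have hsub2 : σ.erase m' ⊆ σ := Finset.erase_subset _ _
    funext i
    refine le_antisymm (Finset.sup_mono hsub2) ?_
    calc σ.sup (fun x => mon x i) = ((σ.erase m).erase m').sup (fun x => mon x i) := by
          have := congrFun (hm'lcm.trans hlcm) i
          exact this.symm
      _ ≤ (σ.erase m').sup (fun x => mon x i) := Finset.sup_mono hsub
  refine ⟨⟨⟨Finset.notMem_erase _ _, by rw [hins]; exact hlcm.symm⟩, ?_⟩, ?_⟩
  · intro m' hb hgt
    rw [hins] at hb
    exact absurd (hmin m' hb) (not_le.mpr hgt)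
  · intro m' hb
    exact not_lt.mpr (hmin m' (key m' hb))

end BarileMacchia
end

section
/- Let S be a finite linearly ordered set of monomials and σ ⊆ S. If m is the smallest true gap of σ among those not dominating any bridge of σ (and such a true gap exists), then m is the smallest bridge of σ ∪ {m}, and m does not dominate any true gap of σ ∪ {m}. -/
namespace BarileMacchia

variable {N : ℕ} {M : Type*}

lemma bridge_insert [DecidableEq M] (mon : M → Fin N → ℕ) (σ : Finset M) (b x : M)
    (hb : IsBridge mon σ b) (hx : x ≠ b) : IsBridge mon (insert x σ) b := by
  refine ⟨Finset.mem_insert_of_mem hb.1, ?_⟩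
  rw [Finset.erase_insert_of_ne hx]
  funext i
  simp only [lcmF, Finset.sup_insert]
  have := congrFun hb.2 i
  simp only [lcmF] at this
  rw [this]

lemma lcmF_mono [DecidableEq M] (mon : M → Fin N → ℕ) {σ τ : Finset M} (h : σ ⊆ τ) (i : Fin N) :
    lcmF mon σ i ≤ lcmF mon τ i := Finset.sup_mono h

/-- Proposition 2.12: if `m` is the smallest true gap of `σ` among those not dominating any
bridge of `σ`, then `m` is the smallest bridge of `σ ∪ {m}` and `m` does not dominate any
true gap of `σ ∪ {m}`. -/
theorem statement2 [LinearOrder M] (mon : M → Fin N → ℕ) (σ : Finset M) (m : M)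
    (h1 : IsTrueGap mon σ m)
    (h2 : ∀ m', IsBridge mon σ m' → ¬ m > m')
    (hmin : ∀ m', IsTrueGap mon σ m' → (∀ m'', IsBridge mon σ m'' → ¬ m' > m'') → m ≤ m') :
    IsSmallestBridge mon (insert m σ) m ∧
      ∀ m', IsTrueGap mon (insert m σ) m' → ¬ m > m' := by
  have hmem : m ∉ σ := h1.1.1
  -- m is a bridge of insert m σ
  have hbm : IsBridge mon (insert m σ) m := by
    refine ⟨Finset.mem_insert_self _ _, ?_⟩
    rw [Finset.erase_insert hmem, h1.1.2]
  constructor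
  · refine ⟨hbm, fun m' hb' => ?_⟩
    by_contra hlt
    push_neg at hlt
    exact h2 m' (h1.2 m' hb' hlt) hlt
  · intro m' ht hgt
    have hm'ne : m' ≠ m := fun h => by simp [h] at ht; exact ht.1.1 (Finset.mem_insert_self _ _)
    have hm'σ : m' ∉ σ := fun h => ht.1.1 (Finset.mem_insert_of_mem h)
    have hgap : IsGap mon σ m' := by
      refine ⟨hm'σ, funext fun i => le_antisymm ?_ (lcmF_mono mon (Finset.subset_insert _ _) i)⟩
      calc lcmF mon (insert m' σ) i
          ≤ lcmF mon (insert m' (insert m σ)) i :=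
            lcmF_mono mon (Finset.insert_subset_insert _ (Finset.subset_insert _ _)) i
        _ = lcmF mon (insert m σ) i := congrFun ht.1.2 i
        _ = lcmF mon σ i := congrFun h1.1.2 i
    have htg : IsTrueGap mon σ m' := by
      refine ⟨hgap, fun m'' hb hlt => ?_⟩
      have hne : m ≠ m'' := ne_of_gt (lt_trans hlt hgt)
      have hb2 : IsBridge mon (insert m (insert m' σ)) m'' := bridge_insert mon _ _ _ hb hne
      rw [Finset.insert_comm] at hb2
      exact h1.2 m'' (ht.2 m'' hb2 hlt) (lt_trans hlt hgt)
    have hnd : ∀ m'', IsBridge mon σ m'' → ¬ m' > m'' := fun m'' hb hlt =>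
      h2 m'' hb (lt_trans hlt hgt)
    exact absurd (hmin m' htg hnd) (not_le_of_gt hgt)

end BarileMacchia
end

section
/- Let I be the edge ideal of the unoriented cycle on 3n+1 vertices, I = (x_1x_2, x_2x_3, …, x_{3n}x_{3n+1}, x_{3n+1}x_1) with n ≥ 1. Then every subset σ of the generating set G(I) with |σ| ≥ 2n+1 contains three 'consecutive' generators m_j = x_jx_{j+1}, m_{j+1}, m_{j+2} (indices mod 3n+1) for some j, and hence σ has a bridge (namely m_{j+1} divides lcm(m_j, m_{j+2}) after removing m_{j+1} still gives the same lcm). -/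
namespace BarileMacchia

variable {N : ℕ} {M : Type*}

/-- Proposition 2.22 (key step): for the edge ideal of the `(3n+1)`-cycle, every subset of
the generators of cardinality at least `2n+1` contains three consecutive generators, and
hence has a bridge (the middle one). -/
theorem statement4 (n : ℕ) (hn : 1 ≤ n)
    (mon : Fin (3 * n + 1) → Fin (3 * n + 1) → ℕ)
    (hmon : ∀ i k, mon i k = if k = i ∨ k = i + 1 then 1 else 0)
    (σ : Finset (Fin (3 * n + 1))) (hcard : 2 * n + 1 ≤ σ.card) :
    ∃ j : Fin (3 * n + 1), j ∈ σ ∧ j + 1 ∈ σ ∧ j + 2 ∈ σ ∧ IsBridge mon σ (j + 1) := by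
  have h1ne0 : (1 : Fin (3 * n + 1)) ≠ 0 := by
    have : (1 : Fin (3 * n + 1)).val = 1 := by
      rw [Fin.val_one']
      exact Nat.mod_eq_of_lt (by omega)
    intro h
    rw [h] at this
    simp at this
  -- indicator sums
  have hA : ∀ c : Fin (3 * n + 1),
      (∑ j : Fin (3 * n + 1), (if j + c ∈ σ then (1 : ℕ) else 0)) = σ.card := by
    intro c
    have := Fintype.sum_equiv (Equiv.addRight c)
      (fun j : Fin (3 * n + 1) => if j + c ∈ σ then (1 : ℕ) else 0)
      (fun k : Fin (3 * n + 1) => if k ∈ σ then (1 : ℕ) else 0)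
      (fun x => rfl)
    rw [this]
    rw [Finset.sum_ite_mem, Finset.univ_inter, Finset.sum_const, smul_eq_mul, mul_one]
  obtain ⟨j, hj, hj1, hj2⟩ : ∃ j : Fin (3 * n + 1), j ∈ σ ∧ j + 1 ∈ σ ∧ j + 2 ∈ σ := by
    by_contra h
    push_neg at h
    have key : ∀ j : Fin (3 * n + 1),
        (if j + 0 ∈ σ then (1 : ℕ) else 0) + (if j + 1 ∈ σ then (1 : ℕ) else 0)
          + (if j + 2 ∈ σ then (1 : ℕ) else 0) ≤ 2 := by
      intro j
      have hj := h j
      rw [add_zero]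
      by_cases a : j ∈ σ <;> by_cases b : j + 1 ∈ σ <;> by_cases c : j + 2 ∈ σ <;>
        simp_all
    have hsum : (∑ j : Fin (3 * n + 1),
        ((if j + 0 ∈ σ then (1 : ℕ) else 0) + (if j + 1 ∈ σ then (1 : ℕ) else 0)
          + (if j + 2 ∈ σ then (1 : ℕ) else 0))) ≤ 2 * (3 * n + 1) := by
      calc (∑ j : Fin (3 * n + 1),
          ((if j + 0 ∈ σ then (1 : ℕ) else 0) + (if j + 1 ∈ σ then (1 : ℕ) else 0)
            + (if j + 2 ∈ σ then (1 : ℕ) else 0)))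
          ≤ ∑ _j : Fin (3 * n + 1), 2 := Finset.sum_le_sum fun j _ => key j
        _ = 2 * (3 * n + 1) := by simp [mul_comm]
    rw [Finset.sum_add_distrib, Finset.sum_add_distrib, hA 0, hA 1, hA 2] at hsum
    omega
  have hjne : j ≠ j + 1 := by
    intro h
    exact h1ne0 (by simpa using (left_eq_add.mp h))
  have hj2ne : j + 2 ≠ j + 1 := by
    intro h
    have h2 : j + 2 = (j + 1) + 1 := by ext; simp [Fin.val_add]
    rw [h2] at h
    exact h1ne0 (add_eq_left.mp h)
  refine ⟨j, hj, hj1, hj2, hj1, ?_⟩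
  funext k
  apply le_antisymm
  · exact Finset.sup_mono (Finset.erase_subset _ _)
  · apply Finset.sup_le
    intro m hm
    by_cases hmj : m = j + 1
    · subst hmj
      rw [hmon]
      by_cases hk1 : k = j + 1 + 1
      · -- k = j + 2 : use the generator m_{j+2}
        have hmem : j + 2 ∈ σ.erase (j + 1) := Finset.mem_erase.mpr ⟨hj2ne, hj2⟩
        have : mon (j + 2) k = 1 := by
          rw [hmon]
          have : k = j + 2 := by rw [hk1]; ext; simp [Fin.val_add]
          simp [this]
        calc (if k = j + 1 ∨ k = j + 1 + 1 then (1:ℕ) else 0) ≤ 1 := by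
              split <;> omega
          _ = mon (j + 2) k := this.symm
          _ ≤ (σ.erase (j + 1)).sup fun m => mon m k := Finset.le_sup (f := fun m => mon m k) hmem
      · by_cases hk0 : k = j + 1
        · -- k = j + 1 : use the generator m_j
          have hmem : j ∈ σ.erase (j + 1) := Finset.mem_erase.mpr ⟨hjne, hj⟩
          have : mon j k = 1 := by
            rw [hmon]
            simp [hk0]
          calc (if k = j + 1 ∨ k = j + 1 + 1 then (1:ℕ) else 0) ≤ 1 := by
                split <;> omega
            _ = mon j k := this.symm
            _ ≤ (σ.erase (j + 1)).sup fun m => mon m k := Finset.le_sup (f := fun m => mon m k) hmem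
        · simp [hk0, hk1]
    · exact Finset.le_sup (f := fun m => mon m k) (Finset.mem_erase.mpr ⟨hmj, hm⟩)

end BarileMacchia
end

section
/- In a simple cycle graph on n vertices with edges e_i = {x_i, x_{i+1}} (indices mod n) and edge monomials m_i = x_i x_{i+1} ∈ ℕ^n, for a subset σ of the set of edge monomials, m_i is a bridge of σ if and only if m_{i-1}, m_i, m_{i+1} are all in σ (assuming all monomials are squarefree of degree 2, i.e., the underlying unweighted cycle). -/
namespace BarileMacchia

variable {N : ℕ} {M : Type*}

/-- Proposition 4.3(a) (unweighted case): for the edge monomials of the `n`-cycle,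
`m_i` is a bridge of `σ` iff `m_{i-1}, m_i, m_{i+1}` all lie in `σ`. -/
theorem statement5 (n : ℕ) [NeZero n] (hn : 4 ≤ n)
    (mon : Fin n → Fin n → ℕ)
    (hmon : ∀ i k, mon i k = if k = i ∨ k = i + 1 then 1 else 0)
    (σ : Finset (Fin n)) (i : Fin n) :
    IsBridge mon σ i ↔ (i - 1 ∈ σ ∧ i ∈ σ ∧ i + 1 ∈ σ) := by
  open Fin.NatCast Fin.CommRing in
  have h1 : (1 : Fin n) ≠ 0 := by
    intro h
    rw [show (1 : Fin n) = ((1:ℕ) : Fin n) by norm_num, Fin.natCast_eq_zero] at h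
    have := Nat.le_of_dvd one_pos h; omega
  open Fin.NatCast Fin.CommRing in
  have h2 : (1 : Fin n) + 1 ≠ 0 := by
    intro h
    rw [show (1 : Fin n) + 1 = ((2:ℕ) : Fin n) by push_cast; ring, Fin.natCast_eq_zero] at h
    have := Nat.le_of_dvd two_pos h; omega
  have hne1 : i - 1 ≠ i := fun h => h1 (sub_eq_self.mp h)
  have hne2 : i + 1 ≠ i := fun h => h1 (add_eq_left.mp h)
  have hne3 : i - 1 ≠ i + 1 := by
    intro h
    have h' : i + (1 + 1) = i := by open Fin.CommRing in linear_combination -h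
    exact h2 (add_eq_left.mp h')
  constructor
  · rintro ⟨hi, heq⟩
    refine ⟨?_, hi, ?_⟩
    · by_contra hni
      have hval : (σ.erase i).sup (fun m => mon m i) = 0 := by
        apply (Finset.sup_eq_bot_iff _ _).mpr
        intro j hj
        have hj1 : j ≠ i := (Finset.mem_erase.mp hj).1
        have hj2 : j ≠ i - 1 := fun h => hni (h ▸ (Finset.mem_erase.mp hj).2)
        have hcond : ¬ ((i:Fin n) = j ∨ i = j + 1) := by
          rintro (h | h)
          · exact hj1 h.symm
          · exact hj2 (by open Fin.CommRing in (rw [h]; ring))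
        show mon j i = 0
        rw [hmon, if_neg hcond]
      have hge : 1 ≤ (σ.erase i).sup (fun m => mon m i) := by
        have : 1 ≤ σ.sup (fun m => mon m i) :=
          le_trans (by show 1 ≤ mon i i; rw [hmon i i]; simp) (Finset.le_sup (f := fun m => mon m i) hi)
        have heqi := congrFun heq i
        simp only [lcmF] at heqi
        omega
      omega
    · by_contra hni
      have hval : (σ.erase i).sup (fun m => mon m (i+1)) = 0 := by
        apply (Finset.sup_eq_bot_iff _ _).mpr
        intro j hj
        have hj1 : j ≠ i := (Finset.mem_erase.mp hj).1
        have hj2 : j ≠ i + 1 := fun h => hni (h ▸ (Finset.mem_erase.mp hj).2)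
        have hcond : ¬ ((i:Fin n) + 1 = j ∨ i + 1 = j + 1) := by
          rintro (h | h)
          · exact hj2 h.symm
          · exact hj1 (add_right_cancel h).symm
        show mon j (i+1) = 0
        rw [hmon, if_neg hcond]
      have hge : 1 ≤ (σ.erase i).sup (fun m => mon m (i+1)) := by
        have : 1 ≤ σ.sup (fun m => mon m (i+1)) :=
          le_trans (by show 1 ≤ mon i (i+1); rw [hmon i (i+1)]; simp)
            (Finset.le_sup (f := fun m => mon m (i+1)) hi)
        have heqi := congrFun heq (i+1)
        simp only [lcmF] at heqi
        omega
      omega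
  · rintro ⟨hm, hi, hp⟩
    refine ⟨hi, ?_⟩
    funext k
    simp only [lcmF]
    apply le_antisymm
    · exact Finset.sup_mono (Finset.erase_subset i σ)
    · apply Finset.sup_le
      intro j hj
      by_cases hji : j = i
      · rw [hji, hmon]
        by_cases hk1 : k = i
        · refine le_trans ?_ (Finset.le_sup (f := fun m => mon m k)
            (Finset.mem_erase.mpr ⟨hne1, hm⟩))
          show _ ≤ mon (i-1) k
          rw [hmon]
          have : k = i - 1 + 1 := by open Fin.CommRing in (rw [hk1]; ring)
          simp [hk1, this]
        · by_cases hk2 : k = i + 1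
          · refine le_trans ?_ (Finset.le_sup (f := fun m => mon m k)
              (Finset.mem_erase.mpr ⟨hne2, hp⟩))
            show _ ≤ mon (i+1) k
            rw [hmon]
            simp [hk2]
          · simp [hk1, hk2]
      · exact Finset.le_sup (f := fun m => mon m k) (Finset.mem_erase.mpr ⟨hji, hj⟩)


end BarileMacchia
end

section
/- Let P be the path graph with edge monomials m_i = x_i x_{i+1} ∈ ℕ^{n+1} for i = 1,…,n. For σ a subset of {m_1,…,m_n}, m_i is a bridge of σ if and only if i is not 1 or n and m_{i-1}, m_i, m_{i+1} ∈ σ. -/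
namespace BarileMacchia

variable {N : ℕ} {M : Type*}

/-- Bridge characterization for the path with edge monomials `m_i = x_i x_{i+1}`:
`m_i` is a bridge of `σ` iff `i` is interior and `m_{i-1}, m_i, m_{i+1} ∈ σ`. -/
theorem statement6 (n : ℕ) (mon : Fin n → Fin (n + 1) → ℕ)
    (hmon : ∀ i k, mon i k = if k = i.castSucc ∨ k = i.succ then 1 else 0)
    (σ : Finset (Fin n)) (i : Fin n) :
    IsBridge mon σ i ↔
      ∃ (_ : 0 < i.val) (h2 : i.val + 1 < n),
        (⟨i.val - 1, Nat.lt_of_le_of_lt (Nat.sub_le _ _) i.isLt⟩ : Fin n) ∈ σ ∧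
          i ∈ σ ∧ (⟨i.val + 1, h2⟩ : Fin n) ∈ σ := by
  constructor
  · rintro ⟨hiσ, heq⟩
    have hcover : ∀ k : Fin (n+1), mon i k = 1 →
        ∃ j ∈ σ.erase i, k = j.castSucc ∨ k = j.succ := by
      intro k hk
      have h1 : 1 ≤ lcmF mon (σ.erase i) k := by
        rw [heq]
        calc 1 = mon i k := hk.symm
          _ ≤ _ := Finset.le_sup (f := fun m => mon m k) hiσ
      rw [lcmF, Finset.le_sup_iff (by norm_num : (0:ℕ) < 1)] at h1
      obtain ⟨j, hj, hj1⟩ := h1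
      refine ⟨j, hj, ?_⟩
      rw [hmon] at hj1
      by_contra hc
      rw [if_neg hc] at hj1
      omega
    obtain ⟨j, hj, hj1⟩ := hcover i.castSucc (by rw [hmon, if_pos (Or.inl rfl)])
    obtain ⟨j', hj', hj'1⟩ := hcover i.succ (by rw [hmon, if_pos (Or.inr rfl)])
    have hjne := (Finset.mem_erase.mp hj).1
    have hjσ := (Finset.mem_erase.mp hj).2
    have hj'ne := (Finset.mem_erase.mp hj').1
    have hj'σ := (Finset.mem_erase.mp hj').2
    have hv : i.val = j.val + 1 := by
      rcases hj1 with h | h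
      · have hv2 : (i:ℕ) = j := by simpa [Fin.ext_iff] using h
        exact (hjne (Fin.ext hv2.symm)).elim
      · simpa [Fin.ext_iff] using h
    have hv' : i.val + 1 = j'.val := by
      rcases hj'1 with h | h
      · simpa [Fin.ext_iff] using h
      · have hv2 : (i:ℕ) = j' := by simpa [Fin.ext_iff] using h
        exact (hj'ne (Fin.ext hv2.symm)).elim
    refine ⟨by omega, by have := j'.isLt; omega, ?_, hiσ, ?_⟩
    · have : (⟨i.val - 1, Nat.lt_of_le_of_lt (Nat.sub_le _ _) i.isLt⟩ : Fin n) = j :=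
        Fin.ext (by simp; omega)
      rwa [this]
    · have : (⟨i.val + 1, by have := j'.isLt; omega⟩ : Fin n) = j' := Fin.ext (by simp; omega)
      rwa [this]
  · rintro ⟨h1, h2, hprev, hiσ, hnext⟩
    refine ⟨hiσ, ?_⟩
    funext k
    have hins : σ = insert i (σ.erase i) := (Finset.insert_erase hiσ).symm
    show (σ.erase i).sup (fun m => mon m k) = σ.sup (fun m => mon m k)
    conv_rhs => rw [hins]
    rw [Finset.sup_insert]
    symm
    rw [sup_eq_right, hmon]
    split_ifs with hk
    · rcases hk with hk | hk
      · have hjm : (⟨i.val - 1, Nat.lt_of_le_of_lt (Nat.sub_le _ _) i.isLt⟩ : Fin n) ∈ σ.erase i :=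
          Finset.mem_erase.mpr ⟨by simp [Fin.ext_iff]; omega, hprev⟩
        calc 1 = mon ⟨i.val - 1, Nat.lt_of_le_of_lt (Nat.sub_le _ _) i.isLt⟩ k := by
              rw [hmon, if_pos (Or.inr (by rw [hk]; exact Fin.ext (by simp; omega)))]
          _ ≤ _ := Finset.le_sup (f := fun m => mon m k) hjm
      · have hjm : (⟨i.val + 1, h2⟩ : Fin n) ∈ σ.erase i :=
          Finset.mem_erase.mpr ⟨by simp [Fin.ext_iff], hnext⟩
        calc 1 = mon ⟨i.val + 1, h2⟩ k := by
              rw [hmon, if_pos (Or.inl (by rw [hk]; exact Fin.ext (by simp)))]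
          _ ≤ _ := Finset.le_sup (f := fun m => mon m k) hjm
    · exact Nat.zero_le _

end BarileMacchia
end

section
/- (Yuzvinsky condition: non-minimal fibers have bridges.) Let S be a finite set of monomials satisfying: for all σ, τ ⊆ S, lcm(σ) = lcm(τ) implies lcm(σ) = lcm(σ ∩ τ). Fix p with P = {σ ⊆ S : lcm(σ) = p} having at least two elements, and let σ_min be the unique inclusion-minimal element of P. Then every σ ∈ P with σ ≠ σ_min has a bridge: indeed every element of σ \ σ_min is a bridge of σ. -/
namespace BarileMacchia

variable {N : ℕ} {M : Type*}

/-- Yuzvinsky condition: every non-minimal member of an lcm-fiber has a bridge; indeed every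
element of `σ \ σ_min` is a bridge of `σ`. -/
theorem statement8 [DecidableEq M] (mon : M → Fin N → ℕ) (S : Finset M)
    (hyuz : ∀ σ τ : Finset M, σ ⊆ S → τ ⊆ S → lcmF mon σ = lcmF mon τ →
      lcmF mon σ = lcmF mon (σ ∩ τ))
    (p : Fin N → ℕ) (σmin : Finset M)
    (hminS : σmin ⊆ S) (hminp : lcmF mon σmin = p)
    (hmin : ∀ τ : Finset M, τ ⊆ S → lcmF mon τ = p → σmin ⊆ τ)
    (σ : Finset M) (hσS : σ ⊆ S) (hσp : lcmF mon σ = p) (hne : σ ≠ σmin) :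
    (∃ m, IsBridge mon σ m) ∧ ∀ m ∈ σ, m ∉ σmin → IsBridge mon σ m := by
  have hsub : σmin ⊆ σ := hmin σ hσS hσp
  have key : ∀ m ∈ σ, m ∉ σmin → IsBridge mon σ m := by
    intro m hmσ hmmin
    refine ⟨hmσ, ?_⟩
    have h1 : σmin ⊆ σ.erase m := fun x hx =>
      Finset.mem_erase.mpr ⟨fun h => hmmin (h ▸ hx), hsub hx⟩
    have h2 : σ.erase m ⊆ σ := Finset.erase_subset m σ
    funext i
    apply le_antisymm
    · exact Finset.sup_mono h2
    · calc σ.sup (fun x => mon x i) = σmin.sup (fun x => mon x i) := by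
            have := congrFun (hminp.trans hσp.symm) i; exact this.symm
        _ ≤ (σ.erase m).sup (fun x => mon x i) := Finset.sup_mono h1
  have hne' : ∃ m ∈ σ, m ∉ σmin := by
    by_contra h
    push_neg at h
    exact hne (Finset.Subset.antisymm h hsub)
  obtain ⟨m, hm1, hm2⟩ := hne'
  exact ⟨⟨m, key m hm1 hm2⟩, key⟩

end BarileMacchia
end

section
/- (Preservation of true gaps under the Yuzvinsky condition.) Let S be a finite linearly ordered set of monomials satisfying: for all σ, τ ⊆ S, lcm(σ) = lcm(τ) implies lcm(σ) = lcm(σ ∩ τ). If m is a true gap of σ ⊆ S and m' ∈ S with m' > m and m' ∉ σ ∪ {m}, then m is a true gap of σ ∪ {m'}. -/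
namespace BarileMacchia

variable {N : ℕ} {M : Type*}

lemma lcmF_insert [DecidableEq M] (mon : M → Fin N → ℕ) (σ : Finset M) (a : M) (i : Fin N) :
    lcmF mon (insert a σ) i = max (mon a i) (lcmF mon σ i) := by
  simp [lcmF, Finset.sup_insert]

/-- Under the Yuzvinsky condition, true gaps are preserved by inserting larger monomials:
if `m` is a true gap of `σ` and `m' > m` with `m' ∉ σ ∪ {m}`, then `m` is a true gap of
`σ ∪ {m'}`. -/
theorem statement9 [LinearOrder M] (mon : M → Fin N → ℕ) (S : Finset M)
    (hyuz : ∀ σ τ : Finset M, σ ⊆ S → τ ⊆ S → lcmF mon σ = lcmF mon τ →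
      lcmF mon σ = lcmF mon (σ ∩ τ))
    (σ : Finset M) (hσ : σ ⊆ S) (m m' : M) (hm : m ∈ S) (hm' : m' ∈ S)
    (htg : IsTrueGap mon σ m) (hgt : m' > m) (hnot : m' ∉ insert m σ) :
    IsTrueGap mon (insert m' σ) m := by
  obtain ⟨⟨hmnot, hlcm⟩, _⟩ := htg
  have hmm' : m ≠ m' := ne_of_lt hgt
  have hm'σ : m' ∉ σ := fun h => hnot (Finset.mem_insert_of_mem h)
  -- lcm of σ ∪ {m,m'} equals lcm of σ ∪ {m'}
  have hins : lcmF mon (insert m (insert m' σ)) = lcmF mon (insert m' σ) := by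
    funext i
    have h1 := congrFun hlcm i
    rw [lcmF_insert] at h1
    simp only [lcmF_insert]
    omega
  constructor
  · refine ⟨?_, hins⟩
    simp only [Finset.mem_insert, not_or]
    exact ⟨hmm', hmnot⟩
  · rintro m'' ⟨hmem, heq⟩ hlt
    have hm''m' : m'' ≠ m' := ne_of_lt (lt_trans hlt hgt)
    have hm''m : m'' ≠ m := ne_of_lt hlt
    have hm''σ : m'' ∈ σ := by
      simp only [Finset.mem_insert] at hmem
      tauto
    refine ⟨Finset.mem_insert_of_mem hm''σ, ?_⟩
    -- Yuzvinsky on X = (σ∪{m,m'}) \ {m''} and Y = σ∪{m'}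
    set X := (insert m (insert m' σ)).erase m'' with hX
    set Y := insert m' σ with hY
    have hXS : X ⊆ S := by
      intro a ha
      have := Finset.mem_of_mem_erase ha
      simp only [Finset.mem_insert] at this
      rcases this with rfl | rfl | h
      · exact hm
      · exact hm'
      · exact hσ h
    have hYS : Y ⊆ S := by
      intro a ha
      simp only [hY, Finset.mem_insert] at ha
      rcases ha with rfl | h
      · exact hm'
      · exact hσ h
    have hXY : lcmF mon X = lcmF mon Y := heq.trans hins
    have hkey := hyuz X Y hXS hYS hXY
    have hint : X ∩ Y = Y.erase m'' := by
      ext a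
      simp only [hX, hY, Finset.mem_inter, Finset.mem_erase, Finset.mem_insert]
      tauto
    rw [hint] at hkey
    calc lcmF mon (Y.erase m'') = lcmF mon X := hkey.symm
      _ = lcmF mon Y := hXY

end BarileMacchia
end

section
/- Let S be a finite set of monomials in ℕ^2 (polynomial ring in two variables). Then for any subsets σ, τ ⊆ S of minimal monomial generators of the ideal they generate (i.e., no element of S divides another), lcm(σ) = lcm(τ) implies lcm(σ) = lcm(σ ∩ τ). -/
namespace BarileMacchia

variable {N : ℕ} {M : Type*}

/-- In two variables, any antichain (under divisibility) of monomials satisfies the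
Yuzvinsky condition: `lcm σ = lcm τ` implies `lcm σ = lcm (σ ∩ τ)`. -/
theorem statement10 (S : Finset (Fin 2 → ℕ))
    (hanti : ∀ a ∈ S, ∀ b ∈ S, a ≤ b → a = b)
    (σ τ : Finset (Fin 2 → ℕ)) (hσ : σ ⊆ S) (hτ : τ ⊆ S)
    (h : lcmF id σ = lcmF id τ) :
    lcmF id σ = lcmF id (σ ∩ τ) := by
  have key : ∀ i : Fin 2, lcmF id σ i ≤ lcmF id (σ ∩ τ) i := by
    intro i
    rcases Nat.eq_zero_or_pos (lcmF id σ i) with h0 | h0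
    · omega
    · have hσne : σ.Nonempty := by
        by_contra hc
        rw [Finset.not_nonempty_iff_eq_empty] at hc
        simp [lcmF, hc] at h0
      have hτne : τ.Nonempty := by
        by_contra hc
        rw [Finset.not_nonempty_iff_eq_empty] at hc
        rw [h] at h0; simp [lcmF, hc] at h0
      obtain ⟨a, ha, haeq⟩ := Finset.exists_mem_eq_sup σ hσne (fun m => id m i)
      obtain ⟨b, hb, hbeq⟩ := Finset.exists_mem_eq_sup τ hτne (fun m => id m i)
      have hab : a i = b i := by
        have h1 : lcmF id σ i = a i := haeq
        have h2 : lcmF id τ i = b i := hbeq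
        rw [h, h2] at h1; exact h1.symm
      have hcomp : a ≤ b ∨ b ≤ a := by
        fin_cases i <;>
          rcases le_total (a 0) (b 0) with h1 | h1 <;>
          rcases le_total (a 1) (b 1) with h2 | h2 <;>
          first
            | (left; intro k; fin_cases k <;> simp_all <;> omega)
            | (right; intro k; fin_cases k <;> simp_all <;> omega)
      have hae : a = b := by
        rcases hcomp with hle | hle
        · exact hanti a (hσ ha) b (hτ hb) hle
        · exact (hanti b (hτ hb) a (hσ ha) hle).symm
      have hmem : a ∈ σ ∩ τ := Finset.mem_inter.mpr ⟨ha, hae ▸ hb⟩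
      calc lcmF id σ i = a i := haeq
        _ ≤ lcmF id (σ ∩ τ) i := Finset.le_sup (f := fun m : Fin 2 → ℕ => id m i) hmem
  funext i
  exact le_antisymm (key i)
    (Finset.sup_mono Finset.inter_subset_left)

end BarileMacchia
end

section
/- (Bridge characterization for weighted naturally oriented trees.) Let T be a weighted rooted tree with edges oriented away from the root and edge monomials m_{(x,z)} = x · z^{w(z)}. For a subset σ of edge monomials and an edge (x,z): m_{(x,z)} is a bridge of σ if and only if m_{(x,z)} ∈ σ and there exist edges xy and zw' of T (distinct from xz and from each other) with m_{xy}, m_{zw'} ∈ σ and m_{(x,z)} divides lcm(m_{xy}, m_{zw'}). -/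
namespace BarileMacchia

variable {V : Type*} [DecidableEq V]

/-- The edge monomial of the directed tree edge `(parent z, z)`: exponent `1` at `parent z`
and `w z` at the child `z`. An edge is indexed by its child vertex `z ≠ root`. -/
def monE (parent : V → V) (w : V → ℕ) (z : V) : V → ℕ :=
  fun v => (if v = parent z then 1 else 0) + (if v = z then w z else 0)

/-- The lcm (pointwise max) of the edge monomials indexed by a finite set of child vertices. -/
def lcmE (parent : V → V) (w : V → ℕ) (σ : Finset V) : V → ℕ :=
  fun v => σ.sup fun z => monE parent w z v

/-- Proposition 3.14(a) (bridge characterization for weighted naturally oriented trees):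
`m_{(x,z)}` is a bridge of `σ` iff it lies in `σ` and there are two further distinct edges of
the tree in `σ`, one incident to `x = parent z` and one incident to `z` (a child edge of `z`),
whose lcm is divisible by `m_{(x,z)}`. The rooted-tree structure is recorded by a rank
function. -/
theorem statement17 (root : V) (parent : V → V) (w : V → ℕ)
    (hw : ∀ v, 1 ≤ w v)
    (rank : V → ℕ) (hroot : rank root = 0)
    (hrank : ∀ z, z ≠ root → rank z = rank (parent z) + 1)
    (σ : Finset V) (hσ : ∀ v ∈ σ, v ≠ root) (z : V) (hz : z ≠ root) :
    (z ∈ σ ∧ lcmE parent w (σ.erase z) = lcmE parent w σ) ↔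
      (z ∈ σ ∧ ∃ a b, a ∈ σ ∧ b ∈ σ ∧ a ≠ z ∧ b ≠ z ∧ a ≠ b ∧
        (a = parent z ∨ parent a = parent z) ∧ parent b = z ∧
        monE parent w z ≤ monE parent w a ⊔ monE parent w b) := by
  have hpz : parent z ≠ z := by
    intro h
    have := hrank z hz
    rw [h] at this
    omega
  constructor
  · rintro ⟨hzσ, heq⟩
    refine ⟨hzσ, ?_⟩
    -- find b handling the vertex z
    have hz1 : w z ≤ lcmE parent w σ z := by
      have := Finset.le_sup (f := fun y => monE parent w y z) hzσ
      have hval : monE parent w z z = w z := by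
        simp [monE, Ne.symm hpz]
      exact hval ▸ this
    rw [← heq] at hz1
    have hb0 : 0 < w z := hw z
    obtain ⟨b, hbmem, hb⟩ := (Finset.le_sup_iff (f := fun y => monE parent w y z)
      (show (⊥ : ℕ) < w z from hb0)).mp hz1
    obtain ⟨hbne, hbσ⟩ := Finset.mem_erase.mp hbmem
    have hbz : parent b = z ∧ w z = 1 := by
      have : monE parent w b z = if z = parent b then 1 else 0 := by
        simp [monE, Ne.symm hbne]
      rw [this] at hb
      by_cases h : z = parent b
      · rw [if_pos h] at hb
        exact ⟨h.symm, le_antisymm hb (hw z)⟩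
      · rw [if_neg h] at hb; omega
    -- find a handling the vertex parent z
    have hx1 : (1 : ℕ) ≤ lcmE parent w σ (parent z) := by
      have := Finset.le_sup (f := fun y => monE parent w y (parent z)) hzσ
      have hval : monE parent w z (parent z) = 1 := by
        simp [monE, hpz]
      exact hval ▸ this
    rw [← heq] at hx1
    obtain ⟨a, hamem, ha⟩ := (Finset.le_sup_iff (f := fun y => monE parent w y (parent z))
      (show (⊥ : ℕ) < 1 from Nat.zero_lt_one)).mp hx1
    obtain ⟨hane, haσ⟩ := Finset.mem_erase.mp hamem
    have hacond : a = parent z ∨ parent a = parent z := by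
      by_cases h1 : parent z = parent a
      · exact Or.inr h1.symm
      by_cases h2 : parent z = a
      · exact Or.inl h2.symm
      · exfalso
        have : monE parent w a (parent z) = 0 := by
          simp [monE, h1, h2]
        rw [this] at ha; omega
    have hab : a ≠ b := by
      intro h
      subst h
      rcases hacond with h1 | h1
      · -- a = parent z and parent a = z : 2-cycle, contradiction via rank
        have hpzroot : parent z ≠ root := h1 ▸ hσ a haσ
        have e1 := hrank z hz
        have e2 := hrank (parent z) hpzroot
        rw [← h1, hbz.1, h1] at e2
        omega
      · rw [hbz.1] at h1
        exact hpz h1.symm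
    refine ⟨a, b, haσ, hbσ, hane, hbne, hab, hacond, hbz.1, ?_⟩
    intro v
    simp only [Pi.sup_apply]
    by_cases h1 : v = parent z
    · have : monE parent w z v = 1 := by
        subst h1; simp [monE, hpz]
      rw [this]
      exact le_sup_of_le_left (h1 ▸ ha)
    · by_cases h2 : v = z
      · have hv : monE parent w z v = w z := by
          subst h2; simp [monE, Ne.symm hpz]
        have hbv : monE parent w b v = 1 := by
          subst h2; simp [monE, hbz.1, Ne.symm hbne]
        rw [hv, hbz.2, hbv]
        exact le_sup_of_le_right le_rfl
      · have : monE parent w z v = 0 := by simp [monE, h1, h2]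
        omega
  · rintro ⟨hzσ, a, b, haσ, hbσ, hane, hbne, hab, hacond, hbz, hle⟩
    refine ⟨hzσ, ?_⟩
    funext v
    have hamem : a ∈ σ.erase z := Finset.mem_erase.mpr ⟨hane, haσ⟩
    have hbmem : b ∈ σ.erase z := Finset.mem_erase.mpr ⟨hbne, hbσ⟩
    have hzle : monE parent w z v ≤ lcmE parent w (σ.erase z) v := by
      have h1 := hle v
      simp only [Pi.sup_apply] at h1
      have h2 : monE parent w a v ≤ lcmE parent w (σ.erase z) v :=
        Finset.le_sup (f := fun y => monE parent w y v) hamem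
      have h3 : monE parent w b v ≤ lcmE parent w (σ.erase z) v :=
        Finset.le_sup (f := fun y => monE parent w y v) hbmem
      omega
    have : σ = insert z (σ.erase z) := (Finset.insert_erase hzσ).symm
    conv_rhs => rw [this]
    show lcmE parent w (σ.erase z) v =
      (insert z (σ.erase z)).sup fun y => monE parent w y v
    rw [Finset.sup_insert]
    exact (sup_eq_right.mpr hzle).symm

end BarileMacchia
end

section
/- (Eliahou–Kervaire splitting for cycles.) Let n ≥ 8 and I = (x_1x_2, x_2x_3, …, x_{n-1}x_n, x_nx_1) be the edge ideal of the n-cycle. Set J = (x_2x_3, …, x_{n-1}x_n) and K = (x_nx_1, x_1x_2). Then I = J + K and this is an Eliahou–Kervaire splitting: there is a function G(J ∩ K) → G(J) × G(K), w ↦ (φ(w), ψ(w)), with w = lcm(φ(w), ψ(w)) for all w, and for every nonempty W ⊆ G(J ∩ K), lcm(φ(W)) and lcm(ψ(W)) strictly divide lcm(W). -/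
namespace BarileMacchia

/-- The monomial ideal (as a set of monomials, i.e. an upper set in `ℕ^n`) generated by `G`. -/
def idealOf {n : ℕ} (G : Set (Fin n → ℕ)) : Set (Fin n → ℕ) :=
  {v | ∃ g ∈ G, g ≤ v}

/-- The minimal monomial generating set of a set of monomials. -/
def minGen {n : ℕ} (Mo : Set (Fin n → ℕ)) : Set (Fin n → ℕ) :=
  {v | v ∈ Mo ∧ ∀ u ∈ Mo, u ≤ v → u = v}

/-- The lcm (pointwise max) of a finite set of monomials. -/
def supF {n : ℕ} (W : Finset (Fin n → ℕ)) : Fin n → ℕ :=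
  fun i => W.sup fun v => v i

lemma ite01_iff {P Q : Prop} [Decidable P] [Decidable Q] (h : P ↔ Q) :
    (if P then (1:ℕ) else 0) = if Q then 1 else 0 := if_congr h rfl rfl

lemma ite01_ne {P : Prop} [Decidable P] : ((if P then (1:ℕ) else 0) ≠ 0) ↔ P := by
  split_ifs with h <;> simp [h]

lemma max01 {P Q : Prop} [Decidable P] [Decidable Q] :
    (if P then (1:ℕ) else 0) ⊔ (if Q then 1 else 0) = if P ∨ Q then 1 else 0 := by
  split_ifs with h1 h2 h3 <;> simp_all

set_option maxHeartbeats 1000000 in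
/-- Proposition 4.22 (Eliahou–Kervaire splitting for the `n`-cycle, `n ≥ 8`): with
`I = (x_1x_2, …, x_nx_1)`, `J = (x_2x_3, …, x_{n-1}x_n)` and `K = (x_nx_1, x_1x_2)`
(vertices indexed by `Fin n`, edge `i` having vertices `i, i+1`), we have `I = J + K`,
and there is a splitting function `w ↦ (φ w, ψ w)` on `G(J ∩ K)` with `w = lcm(φ w, ψ w)`
such that for every nonempty `W ⊆ G(J ∩ K)`, `lcm(φ(W))` and `lcm(ψ(W))` strictly divide
`lcm(W)`. -/
theorem statement18 (n : ℕ) (hn : 8 ≤ n)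
    (m : Fin n → Fin n → ℕ)
    (hm : ∀ i k, m i k = if k = i ∨ k.val = (i.val + 1) % n then 1 else 0)
    (GI GJ GK : Set (Fin n → ℕ))
    (hGI : GI = Set.range m)
    (hGJ : GJ = {v | ∃ i : Fin n, 1 ≤ i.val ∧ i.val ≤ n - 2 ∧ v = m i})
    (hGK : GK = {m ⟨n - 1, by omega⟩, m ⟨0, by omega⟩}) :
    GI = GJ ∪ GK ∧
    ∃ φ ψ : (Fin n → ℕ) → (Fin n → ℕ),
      (∀ v ∈ minGen (idealOf GJ ∩ idealOf GK), φ v ∈ GJ ∧ ψ v ∈ GK ∧ v = φ v ⊔ ψ v) ∧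
      ∀ W : Finset (Fin n → ℕ), W.Nonempty → ↑W ⊆ minGen (idealOf GJ ∩ idealOf GK) →
        (supF (W.image φ) ≤ supF W ∧ supF (W.image φ) ≠ supF W) ∧
        (supF (W.image ψ) ≤ supF W ∧ supF (W.image ψ) ≠ supF W) := by
  classical
  subst hGI
  have hm' : ∀ (i : Fin n), i.val + 1 < n →
      ∀ k, m i k = if k.val = i.val ∨ k.val = i.val + 1 then 1 else 0 := by
    intro i hi k
    rw [hm]
    exact ite01_iff (by rw [Fin.ext_iff, Nat.mod_eq_of_lt hi])
  have hmN : ∀ k, m ⟨n - 1, by omega⟩ k = if k.val = n - 1 ∨ k.val = 0 then 1 else 0 := by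
    intro k
    rw [hm]
    refine ite01_iff ?_
    have h1 : (n - 1 + 1) % n = 0 := by
      have : n - 1 + 1 = n := by omega
      rw [this, Nat.mod_self]
    rw [Fin.ext_iff]
    simp only [Fin.val_mk, h1]
  constructor
  · -- GI = GJ ∪ GK
    subst hGJ hGK
    ext v
    simp only [Set.mem_range, Set.mem_union, Set.mem_setOf_eq, Set.mem_insert_iff,
      Set.mem_singleton_iff]
    constructor
    · rintro ⟨i, rfl⟩
      by_cases h0 : i.val = 0
      · have hi0 : i = ⟨0, by omega⟩ := Fin.ext h0
        right; right; rw [hi0]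
      · by_cases h1 : i.val = n - 1
        · have hi1 : i = ⟨n - 1, by omega⟩ := Fin.ext h1
          right; left; rw [hi1]
        · left; exact ⟨i, by omega, by omega, rfl⟩
    · rintro (⟨i, _, _, rfl⟩ | h | h)
      exacts [⟨i, rfl⟩, ⟨_, h.symm⟩, ⟨_, h.symm⟩]
  · have hm0 : ∀ k, m ⟨0, by omega⟩ k = if k.val = 0 ∨ k.val = 1 then 1 else 0 := by
      intro k
      rw [hm' ⟨0, by omega⟩ (by simp only [Fin.val_mk]; omega)]
    have hm1 : ∀ k, m ⟨1, by omega⟩ k = if k.val = 1 ∨ k.val = 2 then 1 else 0 := by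
      intro k
      rw [hm' ⟨1, by omega⟩ (by simp only [Fin.val_mk]; omega)]
    have hmn2 : ∀ k, m ⟨n - 2, by omega⟩ k = if k.val = n - 2 ∨ k.val = n - 1 then 1 else 0 := by
      intro k
      rw [hm' ⟨n - 2, by omega⟩ (by simp only [Fin.val_mk]; omega)]
      exact ite01_iff (by simp only [Fin.val_mk]; try omega)
    have hGK0 : m ⟨0, by omega⟩ ∈ GK := by
      rw [hGK]; exact Set.mem_insert_iff.mpr (Or.inr rfl)
    have hGKN : m ⟨n - 1, by omega⟩ ∈ GK := by
      rw [hGK]; exact Set.mem_insert _ _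
    have hGJmem : ∀ i : Fin n, 1 ≤ i.val → i.val ≤ n - 2 → m i ∈ GJ := by
      intro i h1 h2; rw [hGJ]; exact ⟨i, h1, h2, rfl⟩
    have hGJelim : ∀ g ∈ GJ, ∃ i : Fin n, 1 ≤ i.val ∧ i.val ≤ n - 2 ∧ g = m i := by
      rw [hGJ]; exact fun g h => h
    have hGKelim : ∀ g ∈ GK, g = m ⟨n - 1, by omega⟩ ∨ g = m ⟨0, by omega⟩ := by
      rw [hGK]; exact fun g h => h
    obtain ⟨Φ, hΦ⟩ : ∃ F : (Fin n → ℕ) → (Fin n → ℕ), ∀ v k, F v k =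
        if v k ≠ 0 ∧ (2 ≤ k.val ∧ k.val ≤ n - 2 ∨
            k.val = 1 ∧ v ⟨2, by omega⟩ ≠ 0 ∨ k.val = n - 1 ∧ v ⟨n - 2, by omega⟩ ≠ 0)
          then 1 else 0 :=
      ⟨fun v k => if v k ≠ 0 ∧ (2 ≤ k.val ∧ k.val ≤ n - 2 ∨
            k.val = 1 ∧ v ⟨2, by omega⟩ ≠ 0 ∨ k.val = n - 1 ∧ v ⟨n - 2, by omega⟩ ≠ 0)
          then 1 else 0, fun v k => rfl⟩
    obtain ⟨Ψ, hΨ⟩ : ∃ F : (Fin n → ℕ) → (Fin n → ℕ), ∀ v, F v =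
        if v ⟨1, by omega⟩ ≠ 0 then m ⟨0, by omega⟩ else m ⟨n - 1, by omega⟩ :=
      ⟨fun v => if v ⟨1, by omega⟩ ≠ 0 then m ⟨0, by omega⟩ else m ⟨n - 1, by omega⟩,
        fun v => rfl⟩
    have hmain : ∀ v ∈ minGen (idealOf GJ ∩ idealOf GK),
        Φ v ∈ GJ ∧ Ψ v ∈ GK ∧ v = Φ v ⊔ Ψ v := by
      intro v hv
      obtain ⟨⟨⟨g, hgJ, hgv⟩, ⟨h, hhK, hhv⟩⟩, hmin⟩ := hv
      obtain ⟨i, hi1, hi2, rfl⟩ := hGJelim g hgJ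
      have hin : i.val + 1 < n := by omega
      have hveq : m i ⊔ h = v :=
        hmin (m i ⊔ h) ⟨⟨m i, hGJmem i hi1 hi2, le_sup_left⟩, ⟨h, hhK, le_sup_right⟩⟩
          (sup_le hgv hhv)
      rcases hGKelim h hhK with hh | hh <;> subst hh
      · -- h = m ⟨n-1⟩ : v = {i, i+1, n-1, 0}
        have hv' : ∀ k : Fin n, v k =
            if (k.val = i.val ∨ k.val = i.val + 1) ∨ (k.val = n - 1 ∨ k.val = 0)
              then 1 else 0 := by
          intro k
          rw [← hveq, Pi.sup_apply, hm' i hin, hmN k, max01]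
        by_cases hA : i.val = 1
        · exfalso
          have hu : (m ⟨1, by omega⟩ ⊔ m ⟨0, by omega⟩ : Fin n → ℕ) = v := by
            refine hmin _ ⟨⟨m ⟨1, by omega⟩,
                hGJmem _ (by simp only [Fin.val_mk]; omega) (by simp only [Fin.val_mk]; omega),
                le_sup_left⟩, ⟨m ⟨0, by omega⟩, hGK0, le_sup_right⟩⟩ ?_
            rw [Pi.le_def]
            intro k
            rw [Pi.sup_apply, hm1, hm0, max01, hv' k]
            split_ifs <;> omega
          have hR : v ⟨n - 1, by omega⟩ ≠ 0 := by
            rw [hv', ite01_ne]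
            exact Or.inr (Or.inl rfl)
          have hL : (m ⟨1, by omega⟩ ⊔ m ⟨0, by omega⟩ : Fin n → ℕ) ⟨n - 1, by omega⟩ = 0 := by
            rw [Pi.sup_apply, hm1, hm0, max01]
            apply if_neg
            intro hc
            simp only [Fin.val_mk] at hc
            omega
          exact hR ((congrFun hu ⟨n - 1, by omega⟩).symm.trans hL)
        · by_cases hB : i.val = n - 3
          · exfalso
            have hu : (m ⟨n - 2, by omega⟩ ⊔ m ⟨n - 1, by omega⟩ : Fin n → ℕ) = v := by
              refine hmin _ ⟨⟨m ⟨n - 2, by omega⟩,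
                  hGJmem _ (by simp only [Fin.val_mk]; omega) (by simp only [Fin.val_mk]; omega),
                  le_sup_left⟩, ⟨m ⟨n - 1, by omega⟩, hGKN, le_sup_right⟩⟩ ?_
              rw [Pi.le_def]
              intro k
              rw [Pi.sup_apply, hmn2, hmN, max01, hv' k]
              split_ifs <;> omega
            have hR : v ⟨n - 3, by omega⟩ ≠ 0 := by
              rw [hv', ite01_ne]
              refine Or.inl (Or.inl ?_)
              simp only [Fin.val_mk]
              omega
            have hL : (m ⟨n - 2, by omega⟩ ⊔ m ⟨n - 1, by omega⟩ : Fin n → ℕ) ⟨n - 3, by omega⟩ = 0 := by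
              rw [Pi.sup_apply, hmn2, hmN, max01]
              apply if_neg
              intro hc
              simp only [Fin.val_mk] at hc
              omega
            exact hR ((congrFun hu ⟨n - 3, by omega⟩).symm.trans hL)
          · -- good: i.val = n-2 or 2 ≤ i.val ≤ n-4
            have hgood : i.val = n - 2 ∨ (2 ≤ i.val ∧ i.val ≤ n - 4) := by omega
            have h1v : v ⟨1, by omega⟩ = 0 := by
              rw [hv']
              apply if_neg
              intro hc
              simp only [Fin.val_mk] at hc
              omega
            have hψv : Ψ v = m ⟨n - 1, by omega⟩ := by
              rw [hΨ]
              exact if_neg (not_not.mpr h1v)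
            refine ⟨?_, ?_, ?_⟩
            · have : Φ v = m i := by
                funext k
                rw [hΦ, hm' i hin]
                simp only [hv', ne_eq, ite01_ne, Fin.val_mk]
                exact ite01_iff (by omega)
              rw [this]; exact hGJmem i hi1 hi2
            · rw [hψv]; exact hGKN
            · funext k
              rw [Pi.sup_apply, hψv, hΦ]
              simp only [hv', ne_eq, ite01_ne, Fin.val_mk, hmN]
              rw [max01]
              exact ite01_iff (by omega)
      · -- h = m ⟨0⟩ : v = {i, i+1, 0, 1}
        have hv' : ∀ k : Fin n, v k =
            if (k.val = i.val ∨ k.val = i.val + 1) ∨ (k.val = 0 ∨ k.val = 1)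
              then 1 else 0 := by
          intro k
          rw [← hveq, Pi.sup_apply, hm' i hin, hm0 k, max01]
        by_cases hA : i.val = 2
        · exfalso
          have hu : (m ⟨1, by omega⟩ ⊔ m ⟨0, by omega⟩ : Fin n → ℕ) = v := by
            refine hmin _ ⟨⟨m ⟨1, by omega⟩,
                hGJmem _ (by simp only [Fin.val_mk]; omega) (by simp only [Fin.val_mk]; omega),
                le_sup_left⟩, ⟨m ⟨0, by omega⟩, hGK0, le_sup_right⟩⟩ ?_
            rw [Pi.le_def]
            intro k
            rw [Pi.sup_apply, hm1, hm0, max01, hv' k]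
            split_ifs <;> omega
          have hR : v ⟨3, by omega⟩ ≠ 0 := by
            rw [hv', ite01_ne]
            refine Or.inl (Or.inr ?_)
            simp only [Fin.val_mk]
            omega
          have hL : (m ⟨1, by omega⟩ ⊔ m ⟨0, by omega⟩ : Fin n → ℕ) ⟨3, by omega⟩ = 0 := by
            rw [Pi.sup_apply, hm1, hm0, max01]
            apply if_neg
            intro hc
            simp only [Fin.val_mk] at hc
            omega
          exact hR ((congrFun hu ⟨3, by omega⟩).symm.trans hL)
        · by_cases hB : i.val = n - 2
          · exfalso
            have hu : (m ⟨n - 2, by omega⟩ ⊔ m ⟨n - 1, by omega⟩ : Fin n → ℕ) = v := by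
              refine hmin _ ⟨⟨m ⟨n - 2, by omega⟩,
                  hGJmem _ (by simp only [Fin.val_mk]; omega) (by simp only [Fin.val_mk]; omega),
                  le_sup_left⟩, ⟨m ⟨n - 1, by omega⟩, hGKN, le_sup_right⟩⟩ ?_
              rw [Pi.le_def]
              intro k
              rw [Pi.sup_apply, hmn2, hmN, max01, hv' k]
              split_ifs <;> omega
            have hR : v ⟨1, by omega⟩ ≠ 0 := by
              rw [hv', ite01_ne]
              exact Or.inr (Or.inr rfl)
            have hL : (m ⟨n - 2, by omega⟩ ⊔ m ⟨n - 1, by omega⟩ : Fin n → ℕ) ⟨1, by omega⟩ = 0 := by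
              rw [Pi.sup_apply, hmn2, hmN, max01]
              apply if_neg
              intro hc
              simp only [Fin.val_mk] at hc
              omega
            exact hR ((congrFun hu ⟨1, by omega⟩).symm.trans hL)
          · -- good: i.val = 1 or 3 ≤ i.val ≤ n-3
            have hgood : i.val = 1 ∨ (3 ≤ i.val ∧ i.val ≤ n - 3) := by omega
            have h1v : v ⟨1, by omega⟩ ≠ 0 := by
              rw [hv', ite01_ne]
              exact Or.inr (Or.inr rfl)
            have hψv : Ψ v = m ⟨0, by omega⟩ := by
              rw [hΨ]
              exact if_pos h1v
            refine ⟨?_, ?_, ?_⟩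
            · have : Φ v = m i := by
                funext k
                rw [hΦ, hm' i hin]
                simp only [hv', ne_eq, ite01_ne, Fin.val_mk]
                exact ite01_iff (by omega)
              rw [this]; exact hGJmem i hi1 hi2
            · rw [hψv]; exact hGK0
            · funext k
              rw [Pi.sup_apply, hψv, hΦ]
              simp only [hv', ne_eq, ite01_ne, Fin.val_mk, hm0]
              rw [max01]
              exact ite01_iff (by omega)
    refine ⟨Φ, Ψ, hmain, ?_⟩
    intro W hWne hWsub
    obtain ⟨w0, hw0⟩ := hWne
    obtain ⟨hφJ0, hψK0, hsplit0⟩ := hmain w0 (hWsub hw0)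
    obtain ⟨i0, hi01, hi02, hφeq0⟩ := hGJelim _ hφJ0
    have hi0n : i0.val + 1 < n := by omega
    -- pointwise ≤ of sups
    have hle : ∀ f : (Fin n → ℕ) → (Fin n → ℕ), (∀ w ∈ W, f w ≤ w) →
        supF (W.image f) ≤ supF W := by
      intro f hf
      rw [Pi.le_def]
      intro k
      apply Finset.sup_le
      intro x hx
      obtain ⟨w, hw, rfl⟩ := Finset.mem_image.mp hx
      exact le_trans (hf w hw k) (Finset.le_sup (f := fun v => v k) hw)
    have hΦle : ∀ w ∈ W, Φ w ≤ w := by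
      intro w hw
      exact le_of_le_of_eq le_sup_left (hmain w (hWsub hw)).2.2.symm
    have hΨle : ∀ w ∈ W, Ψ w ≤ w := by
      intro w hw
      exact le_of_le_of_eq le_sup_right (hmain w (hWsub hw)).2.2.symm
    constructor
    · refine ⟨hle Φ hΦle, ?_⟩
      intro heq
      have h0 := congrFun heq ⟨0, by omega⟩
      have hL : supF (W.image Φ) ⟨0, by omega⟩ = 0 := by
        refine Nat.le_zero.mp (Finset.sup_le ?_)
        intro x hx
        obtain ⟨w, hw, rfl⟩ := Finset.mem_image.mp hx
        simp only [hΦ]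
        refine le_of_eq (if_neg ?_)
        rintro ⟨-, hc⟩
        try simp only [Fin.val_mk] at hc
        omega
      have hR : w0 ⟨0, by omega⟩ ≠ 0 := by
        have hle0 : Ψ w0 ⟨0, by omega⟩ ≤ w0 ⟨0, by omega⟩ :=
          (le_of_le_of_eq le_sup_right hsplit0.symm : Ψ w0 ≤ w0) _
        rcases hGKelim _ hψK0 with h | h <;> rw [h] at hle0
        · rw [hmN, if_pos (Or.inr rfl)] at hle0
          omega
        · rw [hm0, if_pos (Or.inl rfl)] at hle0
          omega
      have : w0 ⟨0, by omega⟩ ≤ supF (W.image Φ) ⟨0, by omega⟩ := by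
        rw [h0]
        exact Finset.le_sup (f := fun v => v ⟨0, by omega⟩) hw0
      omega
    · refine ⟨hle Ψ hΨle, ?_⟩
      -- find an index kk with 2 ≤ kk ≤ n-2 and w0 kk ≠ 0
      obtain ⟨kk, hkk2, hkkn, hwkk⟩ :
          ∃ kk : Fin n, 2 ≤ kk.val ∧ kk.val ≤ n - 2 ∧ w0 kk ≠ 0 := by
        have hφle0 : Φ w0 ≤ w0 := le_of_le_of_eq le_sup_left hsplit0.symm
        by_cases hc : 2 ≤ i0.val
        · refine ⟨i0, hc, hi02, ?_⟩
          have := hφle0 i0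
          rw [hφeq0, hm' i0 hi0n, if_pos (Or.inl (rfl : i0.val = i0.val))] at this
          have h1 : (1:ℕ) ≤ w0 i0 := this
          omega
        · refine ⟨⟨2, by omega⟩, Nat.le_refl 2, by simp only [Fin.val_mk]; omega, ?_⟩
          have := hφle0 ⟨2, by omega⟩
          rw [hφeq0, hm' i0 hi0n] at this
          have h2 : (⟨2, by omega⟩ : Fin n).val = i0.val ∨ (⟨2, by omega⟩ : Fin n).val = i0.val + 1 := by
            simp only [Fin.val_mk]; omega
          rw [if_pos h2] at this
          have h1 : (1:ℕ) ≤ w0 ⟨2, by omega⟩ := this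
          omega
      intro heq
      have h0 := congrFun heq kk
      have hL : supF (W.image Ψ) kk = 0 := by
        refine Nat.le_zero.mp (Finset.sup_le ?_)
        intro x hx
        obtain ⟨w, hw, rfl⟩ := Finset.mem_image.mp hx
        rcases hGKelim _ (hmain w (hWsub hw)).2.1 with h | h <;> rw [h]
        · rw [hmN, if_neg (show ¬(kk.val = n - 1 ∨ kk.val = 0) by omega)]
        · rw [hm0, if_neg (show ¬(kk.val = 0 ∨ kk.val = 1) by omega)]
      have : w0 kk ≤ supF (W.image Ψ) kk := by
        rw [h0]
        exact Finset.le_sup (f := fun v => v kk) hw0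
      omega


end BarileMacchia
end
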